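/- Fix t ∈ ℝ and real n×n matrices F, R, S with R symmetric. Let ψ, W, V : ℝ → M_n(ℝ) be differentiable at t with W(t) symmetric, ψ(t) invertible, and derivatives at t given by ψ'(t) = (F + W(t)·R)·ψ(t), W'(t) = F·W(t) + W(t)·Fᵀ + W(t)·R·W(t) + S, V'(t) = −ψ(t)ᵀ·R·ψ(t). Then the 2n×2n block matrix function Φ(s) := [[ψ(s) + W(s)·(ψ(s)ᵀ)⁻¹·V(s), −W(s)·(ψ(s)ᵀ)⁻¹],[−(ψ(s)ᵀ)⁻¹·V(s), (ψ(s)ᵀ)⁻¹]] is differentiable at t with Φ'(t) = H·Φ(t), where H = [[F, −S],[R, −Fᵀ]]. -/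

import Mathlib

open Matrix

attribute [local instance] Matrix.normedAddCommGroup Matrix.normedSpace

/-!
The lower-right block `g = (ψᵀ)⁻¹` solves the adjoint equation `g' = -(F + W R)ᵀ g`, since the
derivative of a matrix inverse is `-g (ψᵀ)' g`; symmetry of `R` and `W t` turns `(F + W R)ᵀ` into
`Fᵀ + R W`. The product rule then gives every block of `Φ'`, and each block of `Φ' = H Φ` reduces
to a ring identity once `g ψᵀ = 1` is used (it turns `g V'` into `-R ψ`).
-/

open Filter Topology

section MatrixCalculus

variable {𝕜 : Type*} [NontriviallyNormedField 𝕜] {l m n p : Type*} {t : 𝕜}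

theorem hasDerivAt_matrix [Fintype n] {f : 𝕜 → Matrix m n 𝕜} {f' : Matrix m n 𝕜} :
    HasDerivAt f f' t ↔ ∀ i j, HasDerivAt (fun s => f s i j) (f' i j) t :=
  ⟨fun h i => hasDerivAt_pi.1 (hasDerivAt_pi.1 h i),
    fun h => hasDerivAt_pi.2 fun i => hasDerivAt_pi.2 (h i)⟩

theorem HasDerivAt.matrix_mul [Fintype m] [Fintype n] {A : 𝕜 → Matrix l m 𝕜}
    {B : 𝕜 → Matrix m n 𝕜} {A' : Matrix l m 𝕜} {B' : Matrix m n 𝕜}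
    (hA : HasDerivAt A A' t) (hB : HasDerivAt B B' t) :
    HasDerivAt (fun s => A s * B s) (A' * B t + A t * B') t := by
  rw [hasDerivAt_matrix] at hA hB ⊢
  intro i j
  simpa only [mul_apply, Matrix.add_apply, ← Finset.sum_add_distrib] using
    HasDerivAt.fun_sum (u := Finset.univ) fun k _ => (hA i k).fun_mul (hB k j)

theorem HasDerivAt.matrix_transpose [Fintype m] [Fintype n] {A : 𝕜 → Matrix m n 𝕜}
    {A' : Matrix m n 𝕜}
    (hA : HasDerivAt A A' t) : HasDerivAt (fun s => (A s)ᵀ) A'ᵀ t :=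
  hasDerivAt_matrix.2 fun i j => hasDerivAt_matrix.1 hA j i

theorem HasDerivAt.matrix_fromBlocks [Fintype n] [Fintype p]
    {A : 𝕜 → Matrix l n 𝕜} {B : 𝕜 → Matrix l p 𝕜} {C : 𝕜 → Matrix m n 𝕜} {D : 𝕜 → Matrix m p 𝕜}
    {A' : Matrix l n 𝕜} {B' : Matrix l p 𝕜} {C' : Matrix m n 𝕜} {D' : Matrix m p 𝕜}
    (hA : HasDerivAt A A' t) (hB : HasDerivAt B B' t)
    (hC : HasDerivAt C C' t) (hD : HasDerivAt D D' t) :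
    HasDerivAt (fun s => fromBlocks (A s) (B s) (C s) (D s)) (fromBlocks A' B' C' D') t := by
  rw [hasDerivAt_matrix] at hA hB hC hD ⊢
  rintro (i | i) (j | j)
  exacts [hA i j, hB i j, hC i j, hD i j]

variable [Fintype n] [DecidableEq n]

theorem HasDerivAt.matrix_inv {f : 𝕜 → Matrix n n 𝕜} {f' : Matrix n n 𝕜}
    (hf : HasDerivAt f f' t) (hu : IsUnit (f t)) :
    HasDerivAt (fun s => (f s)⁻¹) (-((f t)⁻¹ * f' * (f t)⁻¹)) t := by
  have hdet : (f t).det ≠ 0 := ((isUnit_iff_isUnit_det _).1 hu).ne_zero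
  have hinv_cont : ContinuousAt (fun s => (f s)⁻¹) t := by
    refine (continuousAt_matrix_inv _ ?_).comp hf.continuousAt
    rw [Ring.inverse_eq_inv']
    exact continuousAt_inv₀ hdet
  have hunit : ∀ᶠ s in 𝓝 t, IsUnit (f s) := by
    have hdet_cont := continuous_id.matrix_det.continuousAt.comp hf.continuousAt
    filter_upwards [hdet_cont.eventually_ne hdet] with s hs
    exact (isUnit_iff_isUnit_det _).2 (isUnit_iff_ne_zero.2 hs)
  have hslope : slope (fun s => (f s)⁻¹) t =ᶠ[𝓝[≠] t]
      fun s => -((f s)⁻¹ * slope f t s * (f t)⁻¹) := by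
    filter_upwards [nhdsWithin_le_nhds hunit] with s hs
    rw [slope_def_module, slope_def_module, inv_sub_inv (iff_of_true hs hu), Matrix.mul_smul,
      Matrix.smul_mul, ← smul_neg, ← neg_mul, ← mul_neg, neg_sub]
  refine hasDerivAt_iff_tendsto_slope.2 (Tendsto.congr' hslope.symm ?_)
  replace hf := hasDerivAt_iff_tendsto_slope.1 hf
  exact (((hinv_cont.tendsto.mono_left nhdsWithin_le_nhds).mul hf).mul_const _).neg

theorem HasDerivAt.matrix_transpose_inv {ψ : 𝕜 → Matrix n n 𝕜} {A : Matrix n n 𝕜}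
    (hψ : HasDerivAt ψ (A * ψ t) t) (hu : IsUnit (ψ t)) :
    HasDerivAt (fun s => ((ψ s)ᵀ)⁻¹) (-(Aᵀ * ((ψ t)ᵀ)⁻¹)) t := by
  have hdet : IsUnit (ψ t)ᵀ.det := (isUnit_iff_isUnit_det _).1 ((isUnit_transpose _).2 hu)
  convert hψ.matrix_transpose.matrix_inv ((isUnit_transpose _).2 hu) using 2
  rw [transpose_mul, ← mul_assoc, nonsing_inv_mul _ hdet, one_mul]

end MatrixCalculus

theorem stmt_15_general {n : ℕ} (t : ℝ)
    (F R S : Matrix (Fin n) (Fin n) ℝ) (hR : Rᵀ = R)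
    (ψ W V : ℝ → Matrix (Fin n) (Fin n) ℝ)
    (hWsymm : (W t)ᵀ = W t)
    (hψinv : IsUnit (ψ t))
    (hψ : HasDerivAt ψ ((F + W t * R) * ψ t) t)
    (hW : HasDerivAt W (F * W t + W t * Fᵀ + W t * R * W t + S) t)
    (hV : HasDerivAt V (-((ψ t)ᵀ * R * ψ t)) t)
    (Φ : ℝ → Matrix (Fin n ⊕ Fin n) (Fin n ⊕ Fin n) ℝ)
    (hΦ : Φ = fun s => Matrix.fromBlocks
      (ψ s + W s * ((ψ s)ᵀ)⁻¹ * V s) (-(W s * ((ψ s)ᵀ)⁻¹))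
      (-(((ψ s)ᵀ)⁻¹ * V s)) (((ψ s)ᵀ)⁻¹))
    (H : Matrix (Fin n ⊕ Fin n) (Fin n ⊕ Fin n) ℝ)
    (hH : H = Matrix.fromBlocks F (-S) R (-Fᵀ)) :
    HasDerivAt Φ (H * Φ t) t := by
  set g : ℝ → Matrix (Fin n) (Fin n) ℝ := fun s => ((ψ s)ᵀ)⁻¹
  have hAdj : (F + W t * R)ᵀ = Fᵀ + R * W t := by
    rw [transpose_add, transpose_mul, hR, hWsymm]
  have hg : HasDerivAt g (-((Fᵀ + R * W t) * g t)) t := hAdj ▸ hψ.matrix_transpose_inv hψinv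
  have hgψ : ∀ X, g t * ((ψ t)ᵀ * X) = X := fun X =>
    nonsing_inv_mul_cancel_left _ X ((isUnit_iff_isUnit_det _).1 ((isUnit_transpose _).2 hψinv))
  have hWg := hW.matrix_mul hg
  rw [hΦ, hH]
  convert (hψ.fun_add (hWg.matrix_mul hV)).matrix_fromBlocks hWg.fun_neg
    (hg.matrix_mul hV).fun_neg hg using 1
  beta_reduce
  simp only [fromBlocks_multiply, fromBlocks_inj]
  refine ⟨?_, ?_, ?_, ?_⟩ <;>
    simp only [mul_add, add_mul, mul_neg, neg_mul, neg_neg, mul_assoc, hgψ] <;>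
    abel

/-- The Zakhar-Itkin decomposition solves the fundamental-matrix equation: if
`ψ, W, V` satisfy the indicated Riccati-type differential equations at `t`,
`W t` is symmetric and `ψ` is invertible near `t`, then the block matrix
`Φ(s) = [[ψ + W (ψᵀ)⁻¹ V, -W (ψᵀ)⁻¹],[-(ψᵀ)⁻¹ V, (ψᵀ)⁻¹]](s)` satisfies
`Φ'(t) = H Φ(t)` with `H = [[F, -S],[R, -Fᵀ]]`. -/
theorem stmt_15 {n : ℕ} (t : ℝ)
    (F R S : Matrix (Fin n) (Fin n) ℝ) (hR : Rᵀ = R)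
    (ψ W V : ℝ → Matrix (Fin n) (Fin n) ℝ)
    (hWsymm : (W t)ᵀ = W t)
    (hψinv : IsUnit (ψ t))
    (hψinv' : ∀ᶠ s in nhds t, IsUnit (ψ s))
    (hψ : HasDerivAt ψ ((F + W t * R) * ψ t) t)
    (hW : HasDerivAt W (F * W t + W t * Fᵀ + W t * R * W t + S) t)
    (hV : HasDerivAt V (-((ψ t)ᵀ * R * ψ t)) t)
    (Φ : ℝ → Matrix (Fin n ⊕ Fin n) (Fin n ⊕ Fin n) ℝ)
    (hΦ : Φ = fun s => Matrix.fromBlocks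
      (ψ s + W s * ((ψ s)ᵀ)⁻¹ * V s) (-(W s * ((ψ s)ᵀ)⁻¹))
      (-(((ψ s)ᵀ)⁻¹ * V s)) (((ψ s)ᵀ)⁻¹))
    (H : Matrix (Fin n ⊕ Fin n) (Fin n ⊕ Fin n) ℝ)
    (hH : H = Matrix.fromBlocks F (-S) R (-Fᵀ)) :
    HasDerivAt Φ (H * Φ t) t :=
  stmt_15_general t F R S hR ψ W V hWsymm hψinv hψ hW hV Φ hΦ H hH
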